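/- arXiv:1108.3551 — 8 statements merged into one kernel-verified Lean document; each statement's English description precedes it below -/
import Mathlib

section
/- For nonnegative integers h, e with h + 2e = n, let C(h, e) ⊆ M_n(ℝ) denote the linear span of the matrices B_1, ..., B_n given by B_i = E_{ii} for i ≤ h, B_{h+2j−1} = E_{h+2j−1, h+2j−1} + E_{h+2j, h+2j}, and B_{h+2j} = E_{h+2j, h+2j−1} − E_{h+2j−1, h+2j} for j = 1, ..., e (E_{kl} the elementary matrices). If h + 2e = h' + 2e' = n and there exists P ∈ GL(n, ℝ) such that P · C(h, e) · P^{−1} = C(h', e'), then h = h' and e = e'. (The numbers (h, e) in the normal form for nondegenerate linear ℝ^n-actions on ℝ^n are invariants, independent of the choice of coordinates.) -/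
open scoped BigOperators

/-- The model matrices of the normal form with `h` hyperbolic components followed by
elbolic pairs (0-indexed): `B i = E_{ii}` for `i < h`, and for each pair `i = h+2j`,
`B_{h+2j} = E_{h+2j,h+2j} + E_{h+2j+1,h+2j+1}`,
`B_{h+2j+1} = E_{h+2j+1,h+2j} - E_{h+2j,h+2j+1}`. -/
noncomputable def modelB (n h : ℕ) (i : Fin n) : Matrix (Fin n) (Fin n) ℝ :=
  if (i : ℕ) < h then Matrix.single i i 1
  else if ((i : ℕ) - h) % 2 = 0 then
    (if hlt : (i : ℕ) + 1 < n then
      Matrix.single i i 1 +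
        Matrix.single (⟨(i : ℕ) + 1, hlt⟩ : Fin n) (⟨(i : ℕ) + 1, hlt⟩ : Fin n) 1
     else 0)
  else
    (if hpos : 0 < (i : ℕ) then
      Matrix.single i (⟨(i : ℕ) - 1, by omega⟩ : Fin n) 1 -
        Matrix.single (⟨(i : ℕ) - 1, by omega⟩ : Fin n) i 1
     else 0)

/-- `C(h,e) ⊆ Mₙ(ℝ)`: the linear span of the model matrices, i.e. the Cartan
subalgebra of gl(n,ℝ) corresponding to `h` hyperbolic and `e` elbolic components. -/
noncomputable def cartanC (n h : ℕ) : Submodule ℝ (Matrix (Fin n) (Fin n) ℝ) :=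
  Submodule.span ℝ (Set.range (modelB n h))

/-!
The invariant is the signature of the conjugation-invariant quadratic form `M ↦ tr (M²)` on
`C(h,e)`: nonzero skew-symmetric matrices have `tr (M²) < 0` and nonzero symmetric ones
`tr (M²) > 0`. The rotation generators span an `e`-dimensional skew subspace of `C(h,e)`, the
diagonal generators an `(h+e)`-dimensional symmetric one. If `P` conjugates `C(h,e)` into
`C(h',e')`, the image of the skew subspace is negative definite, so it meets the symmetric
subspace of `C(h',e')` trivially; hence `e + (h' + e') ≤ dim C(h',e') ≤ n = h' + 2e'`, i.e.
`e ≤ e'`. Symmetry gives `e = e'`, and then `h = h'`.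
-/

open Matrix Module

section TraceForm

variable {m n R : Type*} [Fintype m] [Fintype n]
  [PartialOrder R] [NonUnitalRing R] [StarRing R] [StarOrderedRing R] [NoZeroDivisors R]

theorem Matrix.trace_conjTranspose_mul_self_pos {A : Matrix m n R} (hA : A ≠ 0) :
    0 < (Aᴴ * A).trace := by
  rw [← star_vec_dotProduct_vec]
  refine (dotProduct_star_self_nonneg _).lt_of_ne' ?_
  rwa [Ne, dotProduct_star_self_eq_zero, vec_eq_zero_iff]

theorem IsSelfAdjoint.trace_mul_self_pos {A : Matrix n n R} (hA : IsSelfAdjoint A) (h0 : A ≠ 0) :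
    0 < (A * A).trace := by
  simpa only [← star_eq_conjTranspose, hA.star_eq] using trace_conjTranspose_mul_self_pos h0

theorem Matrix.trace_mul_self_neg_of_mem_skewAdjoint {A : Matrix n n R}
    (hA : A ∈ skewAdjoint (Matrix n n R)) (h0 : A ≠ 0) : (A * A).trace < 0 := by
  have hpos := trace_conjTranspose_mul_self_pos h0
  rwa [← star_eq_conjTranspose, skewAdjoint.mem_iff.mp hA, neg_mul, trace_neg, neg_pos] at hpos

end TraceForm

theorem Submodule.finrank_add_finrank_le_of_sign {K V β : Type*} [Field K] [AddCommGroup V]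
    [Module K V] [FiniteDimensional K V] [Preorder β] [Zero β] (q : V → β)
    {S T W : Submodule K V} (hSW : S ≤ W) (hTW : T ≤ W)
    (hS : ∀ x ∈ S, x ≠ 0 → q x < 0) (hT : ∀ x ∈ T, x ≠ 0 → 0 < q x) :
    finrank K S + finrank K T ≤ finrank K W := by
  have hST : S ⊓ T = ⊥ := by
    refine (Submodule.eq_bot_iff _).mpr fun x hx => ?_
    by_contra h0
    exact lt_asymm (hS x hx.1 h0) (hT x hx.2 h0)
  rw [← Submodule.finrank_sup_add_finrank_inf_eq, hST, finrank_bot, add_zero]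
  exact Submodule.finrank_mono (sup_le hSW hTW)

theorem Matrix.linearIndependent_of_apply_eq_ite {ι m n R : Type*} [Fintype ι] [DecidableEq ι]
    [CommRing R] (F : ι → Matrix m n R) (r : ι → m) (c : ι → n)
    (hF : ∀ i j, F i (r j) (c j) = if i = j then 1 else 0) : LinearIndependent R F := by
  rw [Fintype.linearIndependent_iff]
  intro g hg j
  simpa [Matrix.sum_apply, hF] using congrFun (congrFun hg (r j)) (c j)

theorem LinearIndependent.card_le_finrank_of_forall_mem {K V ι : Type*} [Field K] [AddCommGroup V]
    [Module K V] [Fintype ι] {p : Submodule K V} [FiniteDimensional K p] {b : ι → V}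
    (hb : LinearIndependent K b) (hp : ∀ i, b i ∈ p) : Fintype.card ι ≤ finrank K p :=
  (finrank_span_eq_card hb).symm.trans_le <|
    Submodule.finrank_mono (Submodule.span_le.mpr (Set.range_subset_iff.mpr hp))

section Model

variable {n h : ℕ}

theorem modelB_of_lt (i : Fin n) (hi : (i : ℕ) < h) : modelB n h i = single i i 1 := by
  rw [modelB, if_pos hi]

theorem modelB_of_even (i : Fin n) (hi : h ≤ i) (heven : ((i : ℕ) - h) % 2 = 0)
    (hi' : (i : ℕ) + 1 < n) :
    modelB n h i = single i i 1 + single ⟨i + 1, hi'⟩ ⟨i + 1, hi'⟩ 1 := by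
  rw [modelB, if_neg (by omega), if_pos heven, dif_pos hi']

theorem modelB_of_odd (i : Fin n) (hi : h ≤ i) (hodd : ((i : ℕ) - h) % 2 = 1) :
    modelB n h i = single i ⟨i - 1, by omega⟩ 1 - single ⟨i - 1, by omega⟩ i 1 := by
  rw [modelB, if_neg (by omega), if_neg (by omega), dif_pos (by omega)]

theorem finrank_cartanC_le (n h : ℕ) : finrank ℝ (cartanC n h) ≤ n :=
  (finrank_range_le_card (R := ℝ) (modelB n h)).trans_eq (Fintype.card_fin n)

theorem linearIndependent_modelB_elbolic {e : ℕ} (hn : h + 2 * e = n) :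
    LinearIndependent ℝ fun j : Fin e => modelB n h ⟨h + 2 * j + 1, by omega⟩ := by
  refine linearIndependent_of_apply_eq_ite _ (fun j => ⟨h + 2 * j + 1, by omega⟩)
    (fun j => ⟨h + 2 * j, by omega⟩) fun i j => ?_
  rw [modelB_of_odd _ (by simp; omega) (by simp; omega)]
  simp [single_apply, Fin.ext_iff]
  omega

theorem modelB_elbolic_mem_skewAdjoint {e : ℕ} (hn : h + 2 * e = n) (j : Fin e) :
    modelB n h ⟨h + 2 * j + 1, by omega⟩ ∈ skewAdjoint (Matrix (Fin n) (Fin n) ℝ) := by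
  rw [skewAdjoint.mem_iff, modelB_of_odd _ (by simp; omega) (by simp; omega)]
  simp [star_eq_conjTranspose]

/-- The indices `i < h` and `h + 2 * j` of the diagonal model matrices. -/
def diagIndex {e : ℕ} (hn : h + 2 * e = n) : Fin h ⊕ Fin e → Fin n :=
  Sum.elim (fun i => ⟨i, by omega⟩) fun j => ⟨h + 2 * j, by omega⟩

theorem isSelfAdjoint_modelB_diagIndex {e : ℕ} (hn : h + 2 * e = n) (a : Fin h ⊕ Fin e) :
    IsSelfAdjoint (modelB n h (diagIndex hn a)) := by
  rcases a with i | j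
  · rw [diagIndex, Sum.elim_inl, modelB_of_lt _ (by simp)]
    simp [IsSelfAdjoint, star_eq_conjTranspose]
  · rw [diagIndex, Sum.elim_inr, modelB_of_even _ (by simp) (by simp) (by simp; omega)]
    simp [IsSelfAdjoint, star_eq_conjTranspose]

theorem linearIndependent_modelB_diagIndex {e : ℕ} (hn : h + 2 * e = n) :
    LinearIndependent ℝ (modelB n h ∘ diagIndex hn) := by
  refine linearIndependent_of_apply_eq_ite _ (diagIndex hn) (diagIndex hn) fun a b => ?_
  rcases a with i | i
  · rw [Function.comp_apply, diagIndex, Sum.elim_inl, modelB_of_lt _ (by simp)]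
    rcases b with j | j <;> simp [single_apply, Fin.ext_iff]
    all_goals grind
  · rw [Function.comp_apply, diagIndex, Sum.elim_inr,
      modelB_of_even _ (by simp) (by simp) (by simp; omega)]
    rcases b with j | j <;> simp [single_apply, Fin.ext_iff]
    all_goals grind

theorem le_finrank_cartanC_inf_skewAdjoint {e : ℕ} (hn : h + 2 * e = n) :
    e ≤ finrank ℝ ↥(cartanC n h ⊓ skewAdjoint.submodule ℝ (Matrix (Fin n) (Fin n) ℝ)) := by
  simpa using (linearIndependent_modelB_elbolic hn).card_le_finrank_of_forall_mem
    (p := cartanC n h ⊓ skewAdjoint.submodule ℝ _) fun j =>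
      Submodule.mem_inf.mpr
        ⟨Submodule.subset_span (Set.mem_range_self _), modelB_elbolic_mem_skewAdjoint hn j⟩

theorem le_finrank_cartanC_inf_selfAdjoint {e : ℕ} (hn : h + 2 * e = n) :
    h + e ≤ finrank ℝ ↥(cartanC n h ⊓ selfAdjoint.submodule ℝ (Matrix (Fin n) (Fin n) ℝ)) := by
  simpa using (linearIndependent_modelB_diagIndex hn).card_le_finrank_of_forall_mem
    (p := cartanC n h ⊓ selfAdjoint.submodule ℝ _) fun a =>
      Submodule.mem_inf.mpr
        ⟨Submodule.subset_span (Set.mem_range_self _), isSelfAdjoint_modelB_diagIndex hn a⟩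

end Model

theorem le_of_conj_cartanC_le {n h e h' e' : ℕ} (hn : h + 2 * e = n) (hn' : h' + 2 * e' = n)
    (u : (Matrix (Fin n) (Fin n) ℝ)ˣ) (hu : ∀ M ∈ cartanC n h, u * M * u⁻¹ ∈ cartanC n h') :
    e ≤ e' := by
  let φ := (MulSemiringAction.toAlgEquiv ℝ (Matrix (Fin n) (Fin n) ℝ) (ConjAct.toConjAct u))
  have hφ : ∀ M, φ M = u * M * u⁻¹ := fun _ => rfl
  let S := (cartanC n h ⊓ skewAdjoint.submodule ℝ _).map φ.toLinearEquiv.toLinearMap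
  let T := cartanC n h' ⊓ selfAdjoint.submodule ℝ _
  have hS : S ≤ cartanC n h' := by
    rintro _ ⟨M, hM, rfl⟩
    exact hu M hM.1
  have hS_neg : ∀ M ∈ S, M ≠ 0 → (M * M).trace < 0 := by
    rintro _ ⟨M, hM, rfl⟩ h0
    have hM0 : M ≠ 0 := by rintro rfl; simp at h0
    change (φ M * φ M).trace < 0
    rw [← map_mul, hφ, trace_units_conj]
    exact trace_mul_self_neg_of_mem_skewAdjoint hM.2 hM0
  have hT_pos : ∀ M ∈ T, M ≠ 0 → 0 < (M * M).trace := fun M hM h0 =>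
    IsSelfAdjoint.trace_mul_self_pos hM.2 h0
  have key := Submodule.finrank_add_finrank_le_of_sign _ hS inf_le_left hS_neg hT_pos
  rw [LinearEquiv.finrank_map_eq] at key
  have := le_finrank_cartanC_inf_skewAdjoint hn
  have := le_finrank_cartanC_inf_selfAdjoint hn'
  have := finrank_cartanC_le n h'
  omega

/-- The numbers (h,e) of the normal form are invariants: if the Cartan subalgebras
C(h,e) and C(h',e') with h+2e = h'+2e' = n are conjugate by some P ∈ GL(n,ℝ),
then h = h' and e = e'. -/
theorem normal_form_invariants
    (n h e h' e' : ℕ) (hhe : h + 2 * e = n) (hh'e' : h' + 2 * e' = n)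
    (P : Matrix (Fin n) (Fin n) ℝ) (hP : IsUnit P)
    (hconj : (fun M => P * M * P⁻¹) '' (cartanC n h : Set (Matrix (Fin n) (Fin n) ℝ)) =
      (cartanC n h' : Set (Matrix (Fin n) (Fin n) ℝ))) :
    h = h' ∧ e = e' := by
  obtain ⟨u, rfl⟩ := hP
  rw [← coe_units_inv u] at hconj
  have hle : e ≤ e' := le_of_conj_cartanC_le hhe hh'e' u fun M hM => by
    rw [← SetLike.mem_coe, ← hconj]
    exact ⟨M, hM, rfl⟩
  have hge : e' ≤ e := le_of_conj_cartanC_le hh'e' hhe u⁻¹ fun M hM => by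
    rw [← SetLike.mem_coe, ← hconj] at hM
    obtain ⟨N, hN, rfl⟩ := hM
    simpa [mul_assoc] using hN
  omega
end

section
/- Let X : ℝ^n → ℝ^n be a smooth vector field that commutes with the radial (Euler) vector field E(x) = x, i.e. DX(x)(x) = X(x) for all x ∈ ℝ^n. Then X is linear: X(x) = DX(0)(x) for all x ∈ ℝ^n. -/
/-- A smooth vector field on ℝⁿ commuting with the radial (Euler) vector field
E(x) = x is linear. -/
theorem linear_of_commutes_with_euler
    (n : ℕ) (X : (Fin n → ℝ) → (Fin n → ℝ))
    (hX : ContDiff ℝ (⊤ : ℕ∞) X)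
    (hcomm : ∀ x, fderiv ℝ X x x = X x) :
    ∀ x, X x = fderiv ℝ X 0 x := by
  intro x
  have hXd : Differentiable ℝ X := hX.differentiable (by simp)
  -- X 0 = 0
  have hX0 : X 0 = 0 := by
    have := hcomm 0
    rw [map_zero] at this
    exact this.symm
  -- the scaling curve
  have hs : ∀ t : ℝ, HasDerivAt (fun t : ℝ => t • x) x t := by
    intro t
    simpa using (hasDerivAt_id t).smul_const x
  -- g, g1, g2
  set g : ℝ → (Fin n → ℝ) := fun t => X (t • x) with hg_def
  set φ : (Fin n → ℝ) → ((Fin n → ℝ) →L[ℝ] (Fin n → ℝ)) := fderiv ℝ X with hφ_def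
  have hφc : ContDiff ℝ (⊤ : ℕ∞) φ := hX.fderiv_right (by simp)
  set g1 : ℝ → (Fin n → ℝ) := fun t => φ (t • x) x with hg1_def
  set g2 : ℝ → (Fin n → ℝ) := fun t => (fderiv ℝ φ (t • x) x) x with hg2_def
  -- derivative of g
  have hg' : ∀ t, HasDerivAt g (g1 t) t := fun t =>
    ((hXd (t • x)).hasFDerivAt.comp_hasDerivAt t (hs t))
  -- derivative of g1
  have hg1' : ∀ t, HasDerivAt g1 (g2 t) t := by
    intro t
    have h1 : HasDerivAt (fun t : ℝ => φ (t • x)) (fderiv ℝ φ (t • x) x) t :=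
      ((hφc.differentiable (by simp)) (t • x)).hasFDerivAt.comp_hasDerivAt t (hs t)
    simpa using h1.clm_apply (hasDerivAt_const t x)
  -- the Euler relation: t • g1 t = g t
  have hrel : ∀ t : ℝ, t • g1 t = g t := by
    intro t
    have h := hcomm (t • x)
    calc t • g1 t = φ (t • x) (t • x) := by rw [map_smul]
    _ = g t := h
  -- differentiate the relation: t • g2 t = 0
  have hkey : ∀ t : ℝ, t • g2 t = 0 := by
    intro t
    have hL : HasDerivAt (fun t : ℝ => t • g1 t) (t • g2 t + (1 : ℝ) • g1 t) t := by
      exact (hasDerivAt_id t).smul (hg1' t)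
    have hL' : HasDerivAt g (t • g2 t + g1 t) t := by
      have heq : (fun t : ℝ => t • g1 t) = g := funext hrel
      rw [heq] at hL
      simpa using hL
    have h2 : t • g2 t + g1 t = g1 t := hL'.unique (hg' t)
    simpa using h2
  -- g2 = 0 by continuity
  have hg2c : Continuous g2 := by
    have h1 : Continuous (fderiv ℝ φ) := (hφc.fderiv_right (m := 1) (by norm_cast)).continuous
    have h2 : Continuous (fun t : ℝ => fderiv ℝ φ (t • x)) :=
      h1.comp (by continuity)
    exact (h2.clm_apply continuous_const).clm_apply continuous_const
  have hg2_0 : g2 = fun _ => (0 : Fin n → ℝ) := by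
    apply Continuous.ext_on (dense_compl_singleton (0 : ℝ)) hg2c continuous_const
    intro t ht
    have ht' : t ≠ 0 := ht
    rcases smul_eq_zero.1 (hkey t) with h | h
    · exact absurd h ht'
    · exact h
  -- g1 is constant
  have hg1const : ∀ t : ℝ, g1 t = g1 0 := by
    intro t
    apply is_const_of_deriv_eq_zero
    · exact fun s => (hg1' s).differentiableAt
    · intro s
      rw [(hg1' s).deriv, hg2_0]
  -- conclude: h t = g t - t • g1 0 is constant
  have hh : ∀ t : ℝ, HasDerivAt (fun t : ℝ => g t - t • g1 0) 0 t := by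
    intro t
    have := (hg' t).sub ((hasDerivAt_id t).smul_const (g1 0))
    exact this.congr_deriv (by simp [hg1const t])
  have hconst : g 1 - (1 : ℝ) • g1 0 = g 0 - (0 : ℝ) • g1 0 :=
    is_const_of_deriv_eq_zero (fun s => (hh s).differentiableAt)
      (fun s => (hh s).deriv) 1 0
  have hg1_0 : g 1 = g1 0 := by
    have := hconst
    simp only [one_smul, zero_smul, sub_zero] at this
    rw [show g 0 = 0 from by simp [hg_def, hX0]] at this
    exact sub_eq_zero.1 this
  simpa [hg_def, hg1_def, hφ_def] using hg1_0
end

section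
/- Let A_1, ..., A_n be pairwise commuting semisimple real n×n matrices such that the set of points x ∈ ℝ^n at which the vectors A_1 x, ..., A_n x are linearly independent is nonempty. Then the identity matrix I_n belongs to the real linear span of A_1, ..., A_n. (Equivalently, some linear combination of the commuting vector fields of a nondegenerate linear ℝ^n-action on ℝ^n is the radial vector field E(x) = x.) -/
open scoped BigOperators

/-- A real square matrix is semisimple iff it is diagonalizable over ℂ. -/
def IsSemisimpleMatrixR {n : ℕ} (A : Matrix (Fin n) (Fin n) ℝ) : Prop :=
  ∃ P : Matrix (Fin n) (Fin n) ℂ, IsUnit P ∧ ∃ d : Fin n → ℂ,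
    A.map (algebraMap ℝ ℂ) = P * Matrix.diagonal d * P⁻¹

/-- For a nondegenerate linear ℝⁿ-action on ℝⁿ (pairwise commuting semisimple matrices
whose linear vector fields are somewhere linearly independent), the identity matrix —
i.e. the radial vector field E(x) = x — lies in the span of the generators. -/
theorem identity_mem_span_of_nondegenerate
    (n : ℕ) (A : Fin n → Matrix (Fin n) (Fin n) ℝ)
    (hcomm : ∀ i j, A i * A j = A j * A i)
    (hss : ∀ i, IsSemisimpleMatrixR (A i))
    (hind : ∃ x : Fin n → ℝ, LinearIndependent ℝ fun i => (A i).mulVec x) :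
    (1 : Matrix (Fin n) (Fin n) ℝ) ∈ Submodule.span ℝ (Set.range A) := by
  rcases Nat.eq_zero_or_pos n with hn | hn
  · subst hn
    have : (1 : Matrix (Fin 0) (Fin 0) ℝ) = 0 := Subsingleton.elim _ _
    rw [this]; exact Submodule.zero_mem _
  haveI : NeZero n := ⟨hn.ne'⟩
  obtain ⟨x, hLI⟩ := hind
  have hcard : Fintype.card (Fin n) = Module.finrank ℝ (Fin n → ℝ) := by
    simp [Module.finrank_fin_fun]
  let b := basisOfLinearIndependentOfCardEqFinrank hLI hcard
  have hb : ∀ i, b i = (A i).mulVec x := fun i => by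
    simp [b, coe_basisOfLinearIndependentOfCardEqFinrank]
  set c : Fin n → ℝ := fun i => b.repr x i with hc
  set B : Matrix (Fin n) (Fin n) ℝ := ∑ i, c i • A i with hB
  have hBmul : ∀ v : Fin n → ℝ, B.mulVec v = ∑ i, c i • (A i).mulVec v := by
    intro v
    funext j
    simp only [hB, Matrix.mulVec, dotProduct, Finset.sum_apply, Finset.sum_mul,
      Pi.smul_apply, smul_eq_mul, Finset.mul_sum, Matrix.sum_apply, Matrix.smul_apply]
    rw [Finset.sum_comm]
    exact Finset.sum_congr rfl fun i _ => Finset.sum_congr rfl fun k _ => by ring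
  have hBx : B.mulVec x = x := by
    rw [hBmul]
    have := b.sum_repr x
    simpa [hb, hc] using this
  have hBone : B = 1 := by
    have hfix : ∀ j, B.mulVec (b j) = b j := by
      intro j
      rw [hb, Matrix.mulVec_mulVec]
      have : B * A j = A j * B := by
        rw [hB, Finset.sum_mul, Finset.mul_sum]
        refine Finset.sum_congr rfl fun i _ => ?_
        rw [Matrix.smul_mul, Matrix.mul_smul, hcomm]
      rw [this, ← Matrix.mulVec_mulVec, hBx]
    have hlin : Matrix.toLin' B = Matrix.toLin' (1 : Matrix (Fin n) (Fin n) ℝ) := by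
      apply b.ext
      intro j
      simpa [Matrix.toLin'_apply] using hfix j
    exact Matrix.toLin'.injective hlin
  rw [← hBone, hB]
  exact Submodule.sum_mem _ fun i _ =>
    Submodule.smul_mem _ _ (Submodule.subset_span (Set.mem_range_self i))
end

section
/- Let X and Y be C^1 vector fields on an open set U ⊆ ℝ^n with [X, Y] = 0, let z ∈ U with X(z) = 0, and let γ : I → U be a C^1 curve defined on an interval I containing 0 with γ(0) = z and γ'(t) = Y(γ(t)) for all t ∈ I. Then X(γ(t)) = 0 for all t ∈ I. In particular, if Y(z) ≠ 0, then z is not an isolated zero of X: every isolated zero of X_1 in a family of pairwise commuting vector fields X_1, ..., X_p is a common zero of all of them. -/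
/-!
Along an integral curve `γ` of `Y`, the relation `[X, Y] = 0` turns
`d/dt X (γ t) = DX (γ t) (Y (γ t))` into `DY (γ t) (X (γ t))`: the function `X ∘ γ` solves a
linear ODE with continuous coefficients and vanishes at `t = 0`, so by Grönwall it vanishes on
all of `I`. If moreover `Y z ≠ 0`, then `γ t ≠ z` for small `t ≠ 0`, and these points are zeros
of `X` accumulating at `z`.
-/

open Set Filter Topology

section LinearODE

variable {E : Type*} [NormedAddCommGroup E] [NormedSpace ℝ E]

theorem eq_zero_of_hasDerivAt_clm_apply_of_eq_zero_of_le {f : ℝ → E} {A : ℝ → E →L[ℝ] E}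
    {a b : ℝ} (hab : a ≤ b) (hA : ContinuousOn A (Icc a b))
    (hf : ∀ x ∈ Icc a b, HasDerivAt f (A x (f x)) x) (ha : f a = 0) : f b = 0 := by
  obtain ⟨K, hK⟩ := isCompact_Icc.exists_bound_of_continuousOn hA
  exact eq_zero_of_abs_deriv_le_mul_abs_self_of_eq_zero_right
    (fun x hx => (hf x hx).continuousAt.continuousWithinAt)
    (fun x hx => (hf x (Ico_subset_Icc_self hx)).hasDerivWithinAt) ha
    (fun x hx => (A x).le_of_opNorm_le (hK x (Ico_subset_Icc_self hx)) _) b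
    (right_mem_Icc.2 hab)

theorem eq_zero_of_hasDerivAt_clm_apply_of_eq_zero {f : ℝ → E} {A : ℝ → E →L[ℝ] E} {a b : ℝ}
    (hA : ContinuousOn A (uIcc a b)) (hf : ∀ x ∈ uIcc a b, HasDerivAt f (A x (f x)) x)
    (ha : f a = 0) : f b = 0 := by
  rcases le_total a b with hab | hba
  · rw [uIcc_of_le hab] at hA hf
    exact eq_zero_of_hasDerivAt_clm_apply_of_eq_zero_of_le hab hA hf ha
  · rw [uIcc_of_ge hba] at hA hf
    -- run time backwards: `x ↦ f (a + b - x)` solves the ODE with coefficient `-A (a + b - x)`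
    have hreflect : MapsTo (fun x => a + b - x) (Icc b a) (Icc b a) :=
      fun x hx => ⟨by linarith [hx.2], by linarith [hx.1]⟩
    have := eq_zero_of_hasDerivAt_clm_apply_of_eq_zero_of_le (f := fun x => f (a + b - x))
      (A := fun x => -A (a + b - x)) hba
      ((hA.comp (continuousOn_const.sub continuousOn_id) hreflect).neg)
      (fun x hx => (hf _ (hreflect hx)).comp_const_sub (a + b) x)
      (by simpa using ha)
    simpa using this

end LinearODE

theorem hasDerivAt_comp_integralCurve_of_lieBracket_eq_zero {𝕜 E : Type*}
    [NontriviallyNormedField 𝕜] [NormedAddCommGroup E] [NormedSpace 𝕜 E] {X Y : E → E}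
    {γ : 𝕜 → E} {t : 𝕜} (hX : DifferentiableAt 𝕜 X (γ t)) (hγ : HasDerivAt γ (Y (γ t)) t)
    (hXY : fderiv 𝕜 Y (γ t) (X (γ t)) - fderiv 𝕜 X (γ t) (Y (γ t)) = 0) :
    HasDerivAt (fun s => X (γ s)) (fderiv 𝕜 Y (γ t) (X (γ t))) t := by
  rw [sub_eq_zero.1 hXY]
  exact hX.hasFDerivAt.comp_hasDerivAt t hγ

theorem zero_set_invariant_along_commuting_flow_general
    (n : ℕ) (U : Set (Fin n → ℝ)) (hUopen : IsOpen U)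
    (X Y : (Fin n → ℝ) → (Fin n → ℝ))
    (hX : ContDiffOn ℝ 1 X U) (hY : ContDiffOn ℝ 1 Y U)
    (hcomm : ∀ x ∈ U, fderiv ℝ Y x (X x) - fderiv ℝ X x (Y x) = 0)
    (z : Fin n → ℝ) (hXz : X z = 0)
    (I : Set ℝ) (hI : I.OrdConnected) (h0I : (0 : ℝ) ∈ I)
    (γ : ℝ → (Fin n → ℝ)) (hγ0 : γ 0 = z)
    (hγU : ∀ t ∈ I, γ t ∈ U)
    (hγ : ∀ t ∈ I, HasDerivAt γ (Y (γ t)) t) :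
    (∀ t ∈ I, X (γ t) = 0) ∧
      (Y z ≠ 0 → (0 : ℝ) ∈ closure (I \ {0}) →
        z ∈ closure {x | X x = 0 ∧ x ≠ z}) := by
  have hXγ : ∀ t ∈ I, HasDerivAt (fun s => X (γ s)) (fderiv ℝ Y (γ t) (X (γ t))) t :=
    fun t ht => hasDerivAt_comp_integralCurve_of_lieBracket_eq_zero
      ((hX.differentiableOn one_ne_zero).differentiableAt (hUopen.mem_nhds (hγU t ht)))
      (hγ t ht) (hcomm _ (hγU t ht))
  have hDYγ : ContinuousOn (fun s => fderiv ℝ Y (γ s)) I :=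
    (hY.continuousOn_fderiv_of_isOpen hUopen le_rfl).comp
      (fun t ht => (hγ t ht).continuousAt.continuousWithinAt) hγU
  have hzero : ∀ t ∈ I, X (γ t) = 0 := fun t ht =>
    have hsub := hI.uIcc_subset h0I ht
    eq_zero_of_hasDerivAt_clm_apply_of_eq_zero (hDYγ.mono hsub) (fun s hs => hXγ s (hsub hs))
      (by rw [hγ0, hXz])
  refine ⟨hzero, fun hYz h0 => ?_⟩
  have hγz : Tendsto γ (𝓝[≠] 0) (𝓝[≠] z) := hγ0 ▸ (hγ 0 h0I).tendsto_nhdsNE (hγ0 ▸ hYz)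
  have hγz' : Tendsto γ (𝓝[I \ {0}] 0) (𝓝[≠] z) :=
    hγz.mono_left (nhdsWithin_mono _ (sdiff_subset_compl _ _))
  have := mem_closure_iff_nhdsWithin_neBot.1 h0
  refine mem_closure_of_tendsto (tendsto_nhdsWithin_iff.1 hγz').1 ?_
  filter_upwards [self_mem_nhdsWithin, (tendsto_nhdsWithin_iff.1 hγz').2] with s hs hne
  exact ⟨hzero s hs.1, hne⟩

/-- If X and Y are commuting C¹ vector fields, X vanishes at z, and γ is an integral
curve of Y through z defined on an interval I containing 0, then X vanishes along γ.
In particular, if Y(z) ≠ 0 (and 0 is not isolated in I), then z is not an isolated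
zero of X. -/
theorem zero_set_invariant_along_commuting_flow
    (n : ℕ) (U : Set (Fin n → ℝ)) (hUopen : IsOpen U)
    (X Y : (Fin n → ℝ) → (Fin n → ℝ))
    (hX : ContDiffOn ℝ 1 X U) (hY : ContDiffOn ℝ 1 Y U)
    (hcomm : ∀ x ∈ U, fderiv ℝ Y x (X x) - fderiv ℝ X x (Y x) = 0)
    (z : Fin n → ℝ) (hz : z ∈ U) (hXz : X z = 0)
    (I : Set ℝ) (hI : I.OrdConnected) (h0I : (0 : ℝ) ∈ I)
    (γ : ℝ → (Fin n → ℝ)) (hγ0 : γ 0 = z)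
    (hγU : ∀ t ∈ I, γ t ∈ U)
    (hγ : ∀ t ∈ I, HasDerivAt γ (Y (γ t)) t) :
    (∀ t ∈ I, X (γ t) = 0) ∧
      (Y z ≠ 0 → (0 : ℝ) ∈ closure (I \ {0}) →
        z ∈ closure {x | X x = 0 ∧ x ≠ z}) :=
  zero_set_invariant_along_commuting_flow_general n U hUopen X Y hX hY hcomm z hXz I hI h0I γ hγ0
    hγU hγ
end

section
/- Let X be a smooth vector field on an open neighborhood U of 0 in ℝ^m with X(0) = 0, and let F : U → ℝ be a smooth function with DF(x)(X(x)) = 0 for all x ∈ U. Let k ≥ 1 and suppose the iterated derivatives of F at 0 of all orders from 0 through k−1 vanish. Define the homogeneous polynomial G(x) := (1/k!) · D^k F(0)(x, ..., x) (the degree-k Taylor term of F at 0) and let A := DX(0). Then G is a first integral of the linear part of X: DG(x)(A x) = 0 for all x ∈ ℝ^m. -/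
open scoped ContDiff
open Filter Asymptotics Set


section DirD
variable {E W : Type*} [NormedAddCommGroup E] [NormedSpace ℝ E]
  [NormedAddCommGroup W] [NormedSpace ℝ W]

lemma wtop_le (n : ℕ) : (n : WithTop ℕ∞) ≤ ∞ := by exact_mod_cast (le_top : (n:ℕ∞) ≤ ⊤)
lemma wtop_lt (n : ℕ) : (n : WithTop ℕ∞) < ∞ := by
  exact_mod_cast (lt_top_iff_ne_top.2 (by simp) : (n : ℕ∞) < ⊤)

noncomputable def dirD (w : E) (f : E → W) : E → W := fun y => fderiv ℝ f y w

lemma dirD_contDiffOn {U : Set E} (hU : IsOpen U) {f : E → W} (hf : ContDiffOn ℝ ∞ f U)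
    (w : E) : ContDiffOn ℝ ∞ (dirD w f) U :=
  (hf.fderiv_of_isOpen hU (by norm_num)).clm_apply contDiffOn_const

lemma dirD_congr {U : Set E} (hU : IsOpen U) {g₁ g₂ : E → W} (h : Set.EqOn g₁ g₂ U)
    {y : E} (hy : y ∈ U) (a : E) : dirD a g₁ y = dirD a g₂ y := by
  unfold dirD
  rw [Filter.EventuallyEq.fderiv_eq (Filter.eventuallyEq_of_mem (hU.mem_nhds hy) h)]

lemma dirD_comm {U : Set E} (hU : IsOpen U) {f : E → W} (hf : ContDiffOn ℝ ∞ f U)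
    (a b : E) {y : E} (hy : y ∈ U) : dirD a (dirD b f) y = dirD b (dirD a f) y := by
  have hd : DifferentiableAt ℝ (fderiv ℝ f) y :=
    (((hf.fderiv_of_isOpen (m := (1 : WithTop ℕ∞)) hU (by rw [one_add_one_eq_two]; exact_mod_cast wtop_le 2)).differentiableOn
      one_ne_zero).differentiableAt (hU.mem_nhds hy))
  have key : ∀ v w : E, dirD v (dirD w f) y = fderiv ℝ (fderiv ℝ f) y v w := by
    intro v w
    have : fderiv ℝ (fun z => fderiv ℝ f z w) y
        = (fderiv ℝ f y).comp (fderiv ℝ (fun _ => w) y)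
          + (fderiv ℝ (fderiv ℝ f) y).flip w := fderiv_clm_apply hd (differentiableAt_const w)
    show fderiv ℝ (fun z => fderiv ℝ f z w) y v = fderiv ℝ (fderiv ℝ f) y v w
    rw [this]
    simp
  rw [key a b, key b a]
  have hsym : IsSymmSndFDerivAt ℝ f y :=
    (hf.contDiffAt (hU.mem_nhds hy)).isSymmSndFDerivAt (by rw [minSmoothness_of_isRCLikeNormedField]; exact_mod_cast (wtop_le 2))
  exact hsym a b

end DirD

section IterDD
variable {E W : Type*} [NormedAddCommGroup E] [NormedSpace ℝ E]
  [NormedAddCommGroup W] [NormedSpace ℝ W]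

noncomputable def iterDD : (n : ℕ) → (Fin n → E) → (E → W) → E → W
  | 0, _, f => f
  | n+1, w, f => dirD (w 0) (iterDD n (Fin.tail w) f)

lemma iterDD_contDiffOn {U : Set E} (hU : IsOpen U) :
    ∀ (n : ℕ) (w : Fin n → E) (f : E → W), ContDiffOn ℝ ∞ f U →
      ContDiffOn ℝ ∞ (iterDD n w f) U
  | 0, _, _, hf => hf
  | n+1, w, f, hf => dirD_contDiffOn hU (iterDD_contDiffOn hU n (Fin.tail w) f hf) _

lemma iterDD_congr {U : Set E} (hU : IsOpen U) :
    ∀ (n : ℕ) (w : Fin n → E) {g₁ g₂ : E → W}, Set.EqOn g₁ g₂ U →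
      Set.EqOn (iterDD n w g₁) (iterDD n w g₂) U
  | 0, _, _, _, h => h
  | n+1, w, g₁, g₂, h => fun y hy =>
      dirD_congr hU (iterDD_congr hU n (Fin.tail w) h) hy (w 0)

lemma iterDD_eq_iteratedFDeriv {U : Set E} (hU : IsOpen U) :
    ∀ (n : ℕ) (f : E → W), ContDiffOn ℝ ∞ f U → ∀ (w : Fin n → E) {y : E}, y ∈ U →
      iteratedFDeriv ℝ n f y w = iterDD n w f y := by
  intro n
  induction n with
  | zero => intro f hf w y hy; simp [iterDD, iteratedFDeriv_zero_apply]
  | succ n IH =>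
    intro f hf w y hy
    have hdiff : DifferentiableAt ℝ (iteratedFDeriv ℝ n f) y := by
      have h1 : DifferentiableWithinAt ℝ (iteratedFDerivWithin ℝ n f U) U y :=
        (hf.differentiableOn_iteratedFDerivWithin (wtop_lt n) hU.uniqueDiffOn) y hy
      have h2 : DifferentiableAt ℝ (iteratedFDerivWithin ℝ n f U) y :=
        h1.differentiableAt (hU.mem_nhds hy)
      have h3 : iteratedFDerivWithin ℝ n f U =ᶠ[nhds y] iteratedFDeriv ℝ n f :=
        Filter.eventuallyEq_of_mem (hU.mem_nhds hy)
          (fun z hz => iteratedFDerivWithin_of_isOpen n hU hz)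
      exact h3.differentiableAt_iff.1 h2
    have step1 : iteratedFDeriv ℝ (n+1) f y w
        = fderiv ℝ (fun z => iteratedFDeriv ℝ n f z (Fin.tail w)) y (w 0) := by
      rw [iteratedFDeriv_succ_apply_left]
      have hc := ((ContinuousMultilinearMap.apply ℝ (fun _ : Fin n => E) W
        (Fin.tail w)).hasFDerivAt.comp y hdiff.hasFDerivAt).fderiv
      rw [show (fun z => iteratedFDeriv ℝ n f z (Fin.tail w))
        = (ContinuousMultilinearMap.apply ℝ (fun _ : Fin n => E) W (Fin.tail w))
          ∘ (iteratedFDeriv ℝ n f) from rfl, hc]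
      rfl
    rw [step1]
    have step2 : (fun z => iteratedFDeriv ℝ n f z (Fin.tail w))
        =ᶠ[nhds y] iterDD n (Fin.tail w) f :=
      Filter.eventuallyEq_of_mem (hU.mem_nhds hy) (fun z hz => IH f hf (Fin.tail w) hz)
    rw [step2.fderiv_eq]
    rfl

end IterDD

section Swap
variable {E W : Type*} [NormedAddCommGroup E] [NormedSpace ℝ E]
  [NormedAddCommGroup W] [NormedSpace ℝ W]

lemma iterDD_succ (n : ℕ) (w : Fin (n+1) → E) (f : E → W) :
    iterDD (n+1) w f = dirD (w 0) (iterDD n (Fin.tail w) f) := rfl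

lemma tail_if (j : ℕ) (a b : E) (n : ℕ) :
    Fin.tail (fun l : Fin (n+1) => if l.val = j+1 then a else b)
      = (fun l : Fin n => if l.val = j then a else b) := by
  funext l; simp [Fin.tail, Fin.val_succ]

lemma tail_if_zero (a b : E) (n : ℕ) :
    Fin.tail (fun l : Fin (n+1) => if l.val = 0 then a else b) = (fun _ : Fin n => b) := by
  funext l; simp [Fin.tail, Fin.val_succ]

lemma iterDD_swap_succ {U : Set E} (hU : IsOpen U) :
    ∀ (i n : ℕ) (f : E → W), ContDiffOn ℝ ∞ f U → ∀ (x v : E), i + 1 < n →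
      Set.EqOn (iterDD n (fun l => if l.val = i + 1 then v else x) f)
               (iterDD n (fun l => if l.val = i then v else x) f) U := by
  intro i
  induction i with
  | zero =>
    intro n f hf x v hn y hy
    obtain ⟨n', rfl⟩ : ∃ n', n = n' + 2 := ⟨n - 2, by omega⟩
    show iterDD (n'+1+1) _ f y = iterDD (n'+1+1) _ f y
    rw [iterDD_succ, iterDD_succ, tail_if 0 v x, tail_if_zero v x,
      iterDD_succ, iterDD_succ, tail_if_zero v x]
    simp only [Fin.val_zero, zero_add]
    have ht : Fin.tail (fun _ : Fin (n'+1) => x) = (fun _ : Fin n' => x) := rfl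
    simp only [if_neg (Nat.zero_ne_one), if_pos trivial, if_true, ht]
    exact dirD_comm hU (iterDD_contDiffOn hU n' _ f hf) x v hy
  | succ i IH =>
    intro n f hf x v hn y hy
    obtain ⟨n', rfl⟩ : ∃ n', n = n' + 1 := ⟨n - 1, by omega⟩
    rw [iterDD_succ, iterDD_succ, tail_if (i+1) v x, tail_if i v x]
    simp only [Fin.val_zero]
    simp only [show ¬ (0:ℕ) = i+1+1 by omega, show ¬ (0:ℕ) = i+1 by omega, if_false]
    exact dirD_congr hU (IH n' f hf x v (by omega)) hy x

lemma iterDD_if_eq_zero {U : Set E} (hU : IsOpen U) :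
    ∀ (j n : ℕ) (f : E → W), ContDiffOn ℝ ∞ f U → ∀ (x v : E), j < n →
      Set.EqOn (iterDD n (fun l => if l.val = j then v else x) f)
               (iterDD n (fun l => if l.val = 0 then v else x) f) U := by
  intro j
  induction j with
  | zero => intro n f hf x v hj y hy; rfl
  | succ j IH =>
    intro n f hf x v hj
    exact (iterDD_swap_succ hU j n f hf x v hj).trans (IH n f hf x v (by omega))

end Swap

section Peano
variable {W : Type*} [NormedAddCommGroup W] [NormedSpace ℝ W]

lemma peano_remainder {s : Set ℝ} (hs : IsOpen s) (h0 : (0:ℝ) ∈ s) :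
    ∀ (n : ℕ) (h : ℝ → W), ContDiffOn ℝ ∞ h s → (∀ j < n, iteratedDeriv j h 0 = 0) →
      (fun t => h t - (t^n / (n.factorial : ℝ)) • iteratedDeriv n h 0) =o[nhds 0]
        (fun t => t^n) := by
  intro n
  induction n with
  | zero =>
    intro h hh hz
    simp only [pow_zero, Nat.factorial_zero, Nat.cast_one, div_one, one_smul,
      iteratedDeriv_zero]
    rw [Asymptotics.isLittleO_one_iff]
    have hc : ContinuousAt h 0 := (hh.continuousOn.continuousAt (hs.mem_nhds h0))
    have := hc.tendsto.sub (tendsto_const_nhds (x := h 0))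
    simpa using this
  | succ n IH =>
    intro h hh hz
    set C := iteratedDeriv (n+1) h 0 with hC
    have hh' : ContDiffOn ℝ ∞ (deriv h) s := hh.deriv_of_isOpen hs (by norm_num)
    have hz' : ∀ j < n, iteratedDeriv j (deriv h) 0 = 0 := by
      intro j hj
      have := hz (j+1) (by omega)
      rwa [iteratedDeriv_succ'] at this
    have hC' : iteratedDeriv n (deriv h) 0 = C := by rw [hC, iteratedDeriv_succ']
    have IH2 := IH (deriv h) hh' hz'
    rw [hC'] at IH2
    have h00 : h 0 = 0 := by simpa using hz 0 (by omega)
    rw [Asymptotics.isLittleO_iff]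
    intro c hc
    rw [Asymptotics.isLittleO_iff] at IH2
    have hev := (IH2 hc).and (hs.eventually_mem h0)
    rw [Metric.eventually_nhds_iff] at hev ⊢
    obtain ⟨δ, hδ, hδ2⟩ := hev
    refine ⟨δ, hδ, fun {t} ht => ?_⟩
    set φ : ℝ → W := fun τ => deriv h τ - (τ^n / (n.factorial : ℝ)) • C with hφ
    set g : ℝ → W := fun τ => h τ - (τ^(n+1) / ((n+1).factorial : ℝ)) • C with hg
    have hg0 : g 0 = 0 := by simp [hg, h00]
    rw [Real.dist_eq, sub_zero] at ht
    have habs : ∀ τ : ℝ, |τ| ≤ |t| → dist τ 0 < δ ∧ ‖φ τ‖ ≤ c * |t|^n := by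
      intro τ hτ
      have hd : dist τ 0 < δ := by rw [Real.dist_eq, sub_zero]; exact hτ.trans_lt ht
      refine ⟨hd, ?_⟩
      have hb := (hδ2 hd).1
      rw [Real.norm_eq_abs, abs_pow] at hb
      exact hb.trans (mul_le_mul_of_nonneg_left (pow_le_pow_left₀ (abs_nonneg τ) hτ n) hc.le)
    have hder : ∀ τ : ℝ, |τ| ≤ |t| → HasDerivAt g (φ τ) τ := by
      intro τ hτ
      have hτs : τ ∈ s := (hδ2 (habs τ hτ).1).2
      have hd1 : HasDerivAt h (deriv h τ) τ :=
        (((hh.differentiableOn (by norm_num)) τ hτs).differentiableAt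
          (hs.mem_nhds hτs)).hasDerivAt
      have hd2 : HasDerivAt (fun τ : ℝ => (τ^(n+1) / ((n+1).factorial : ℝ)) • C)
          ((τ^n / (n.factorial : ℝ)) • C) τ := by
        have := ((hasDerivAt_pow (n+1) τ).div_const ((n+1).factorial : ℝ)).smul_const C
        convert this using 2
        field_simp [Nat.factorial_succ]
        simp only [Nat.add_sub_cancel_left, add_comm 1 n, Nat.factorial_succ, Nat.cast_mul,
          Nat.cast_add, Nat.cast_one, Nat.add_sub_cancel, add_tsub_cancel_left]
        ring
      exact hd1.sub hd2
    have key : ‖g t‖ ≤ c * |t|^n * |t| := by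
      rcases le_total 0 t with htpos | htneg
      · have hmem : ∀ τ ∈ Set.Icc (0:ℝ) t, |τ| ≤ |t| := fun τ hτ => by
          rw [abs_of_nonneg hτ.1, abs_of_nonneg htpos]; exact hτ.2
        have hmvt := norm_image_sub_le_of_norm_deriv_le_segment'
          (f := g) (f' := φ) (a := 0) (b := t) (C := c * |t|^n)
          (fun τ hτ => (hder τ (hmem τ hτ)).hasDerivWithinAt)
          (fun τ hτ => (habs τ (hmem τ (Set.Ico_subset_Icc_self hτ))).2)
          t (Set.right_mem_Icc.2 htpos)
        rw [hg0, sub_zero, sub_zero] at hmvt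
        simpa [abs_of_nonneg htpos] using hmvt
      · have hmem : ∀ τ ∈ Set.Icc t (0:ℝ), |τ| ≤ |t| := fun τ hτ => by
          rw [abs_of_nonpos (hτ.2), abs_of_nonpos htneg]; linarith [hτ.1]
        have hmvt := norm_image_sub_le_of_norm_deriv_le_segment'
          (f := g) (f' := φ) (a := t) (b := 0) (C := c * |t|^n)
          (fun τ hτ => (hder τ (hmem τ hτ)).hasDerivWithinAt)
          (fun τ hτ => (habs τ (hmem τ (Set.Ico_subset_Icc_self hτ))).2)
          0 (Set.right_mem_Icc.2 htneg)
        rw [hg0, zero_sub, norm_neg, zero_sub] at hmvt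
        simpa [abs_of_nonpos htneg] using hmvt
    calc ‖g t‖ ≤ c * |t|^n * |t| := key
    _ = c * ‖t^(n+1)‖ := by rw [Real.norm_eq_abs, abs_pow, pow_succ]; ring

end Peano

lemma const_eq_zero_of_isLittleO {n : ℕ} {b : ℝ}
    (h : (fun t : ℝ => t^n * b) =o[nhds 0] fun t => t^n) : b = 0 := by
  by_contra hb
  have hpos : (0:ℝ) < |b| / 2 := by positivity
  obtain ⟨δ, hδ, h2⟩ := Metric.eventually_nhds_iff.1 (h.def hpos)
  set t : ℝ := δ / 2 with htdef
  have ht : dist t 0 < δ := by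
    rw [Real.dist_eq, sub_zero, abs_of_pos (by positivity)]; linarith
  have := h2 ht
  rw [Real.norm_eq_abs, Real.norm_eq_abs, abs_mul] at this
  have htn : (0:ℝ) < |t^n| := by
    rw [abs_pos]; positivity
  nlinarith [abs_nonneg b, htn]


/-- If F is a first integral of the smooth vector field X (with X(0) = 0) and all
Taylor terms of F at 0 of order < k vanish, then the degree-k homogeneous Taylor term
G of F at 0 is a first integral of the linear part A = DX(0) of X. -/
theorem taylor_term_is_first_integral_of_linear_part
    (m : ℕ) (U : Set (Fin m → ℝ)) (hUopen : IsOpen U) (hU0 : (0 : Fin m → ℝ) ∈ U)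
    (X : (Fin m → ℝ) → (Fin m → ℝ)) (hXsm : ContDiffOn ℝ (⊤ : ℕ∞) X U)
    (hX0 : X 0 = 0)
    (F : (Fin m → ℝ) → ℝ) (hFsm : ContDiffOn ℝ (⊤ : ℕ∞) F U)
    (hFint : ∀ x ∈ U, fderiv ℝ F x (X x) = 0)
    (k : ℕ) (hk : 1 ≤ k)
    (hlow : ∀ l < k, iteratedFDeriv ℝ l F 0 = 0)
    (G : (Fin m → ℝ) → ℝ)
    (hG : ∀ x, G x = ((k.factorial : ℝ))⁻¹ • iteratedFDeriv ℝ k F 0 (fun _ => x))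
    (A : (Fin m → ℝ) →L[ℝ] (Fin m → ℝ)) (hA : A = fderiv ℝ X 0) :
    ∀ x : Fin m → ℝ, fderiv ℝ G x (A x) = 0 := by
  obtain ⟨k', rfl⟩ : ∃ k', k = k' + 1 := ⟨k - 1, by omega⟩
  intro x
  have hF : ContDiffOn ℝ ∞ F U := hFsm.of_le (by simp)
  have hX : ContDiffOn ℝ ∞ X U := hXsm.of_le (by simp)
  set Wf : (Fin m → ℝ) → ((Fin m → ℝ) →L[ℝ] ℝ) := fun y => fderiv ℝ F y with hWfdef
  have hWsm : ContDiffOn ℝ ∞ Wf U := hF.fderiv_of_isOpen hUopen (by norm_num)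
  have hWlow : ∀ j, j < k' → iteratedFDeriv ℝ j Wf 0 = 0 := by
    intro j hj
    apply ContinuousMultilinearMap.ext; intro w
    apply ContinuousLinearMap.ext; intro v
    have h := iteratedFDeriv_succ_apply_right (𝕜 := ℝ) (n := j) (f := F)
      (x := (0 : Fin m → ℝ)) (Fin.snoc w v)
    rw [hlow (j+1) (by omega)] at h
    simp only [Fin.init_snoc, Fin.snoc_last, ContinuousMultilinearMap.zero_apply] at h
    rw [ContinuousMultilinearMap.zero_apply, ContinuousLinearMap.zero_apply]
    exact h.symm
  -- the analytic core
  have hkey : iteratedFDeriv ℝ k' Wf 0 (fun _ => x) (A x) = 0 := by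
    set L : ℝ →L[ℝ] (Fin m → ℝ) := ContinuousLinearMap.toSpanSingleton ℝ x with hLdef
    have hLa : ∀ t : ℝ, L t = t • x := fun t => rfl
    set s' : Set ℝ := L ⁻¹' U with hs'def
    have hs'o : IsOpen s' := hUopen.preimage L.continuous
    have h0s' : (0:ℝ) ∈ s' := by
      show L 0 ∈ U
      rw [map_zero]; exact hU0
    have hu : ContDiffOn ℝ ∞ (Wf ∘ L) s' := hWsm.comp_continuousLinearMap L
    have hiter : ∀ j : ℕ, iteratedDeriv j (Wf ∘ L) 0
        = iteratedFDeriv ℝ j Wf 0 (fun _ => x) := by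
      intro j
      rw [iteratedDeriv_eq_iteratedFDeriv]
      have h1 : iteratedFDeriv ℝ j (Wf ∘ L) 0 = iteratedFDerivWithin ℝ j (Wf ∘ L) s' 0 :=
        (iteratedFDerivWithin_of_isOpen j hs'o h0s').symm
      have h2 := L.iteratedFDerivWithin_comp_right (f := Wf) hWsm hUopen.uniqueDiffOn
        hs'o.uniqueDiffOn (x := (0:ℝ)) (by rw [map_zero]; exact hU0) (wtop_le j)
      rw [h1, h2, map_zero, iteratedFDerivWithin_of_isOpen j hUopen hU0]
      rw [ContinuousMultilinearMap.compContinuousLinearMap_apply]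
      congr 1
      funext i
      rw [hLa]
      simp
    set c : (Fin m → ℝ) →L[ℝ] ℝ := iteratedFDeriv ℝ k' Wf 0 (fun _ => x) with hcdef
    have hp : (fun t => (Wf ∘ L) t - (t^k' / (k'.factorial:ℝ)) • c)
        =o[nhds 0] (fun t => t^k') := by
      have := peano_remainder hs'o h0s' k' (Wf ∘ L) hu
        (fun j hj => by rw [hiter j, hWlow j hj]; simp)
      rwa [hiter k'] at this
    have hq : (fun t : ℝ => X (t • x) - t • (A x)) =o[nhds 0] (fun t => t) := by
      have hXd : DifferentiableAt ℝ X 0 :=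
        ((hX.differentiableOn (by norm_num)) 0 hU0).differentiableAt (hUopen.mem_nhds hU0)
      have hγ : HasDerivAt (fun t : ℝ => t • x) x 0 := by
        simpa using (hasDerivAt_id (0:ℝ)).smul_const x
      have hXf : HasFDerivAt X (fderiv ℝ X 0) ((0:ℝ) • x) := by
        rw [zero_smul]; exact hXd.hasFDerivAt
      have hXv : HasDerivAt (fun t : ℝ => X (t • x)) (A x) 0 := by
        rw [hA]
        exact hXf.comp_hasDerivAt 0 hγ
      have := hasDerivAt_iff_isLittleO.1 hXv
      simpa [hX0] using this
    have hzero : (fun t : ℝ => (Wf ∘ L) t (X (t • x))) =ᶠ[nhds 0] (fun _ => (0:ℝ)) := by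
      have hcont : Filter.Tendsto (fun t : ℝ => t • x) (nhds 0) (nhds 0) := by
        have := (continuous_id.smul (continuous_const (y := x))).tendsto (0:ℝ)
        have h2 : Filter.Tendsto (fun t : ℝ => t • x) (nhds 0) (nhds ((0:ℝ) • x)) := this
        rwa [zero_smul] at h2
      filter_upwards [hcont.eventually (hUopen.eventually_mem hU0)] with t htU
      show Wf (L t) (X (t • x)) = 0
      rw [hLa]
      exact hFint _ htU
    set a : ℝ := c (A x) with hadef
    set p : ℝ → ((Fin m → ℝ) →L[ℝ] ℝ) :=
      fun t => (Wf ∘ L) t - (t^k' / (k'.factorial:ℝ)) • c with hpdef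
    set q : ℝ → (Fin m → ℝ) := fun t => X (t • x) - t • (A x) with hqdef
    have hpn : (fun t => ‖p t‖) =o[nhds 0] (fun t : ℝ => t^k') :=
      Asymptotics.isLittleO_norm_left.2 hp
    have hqn : (fun t => ‖q t‖) =o[nhds 0] (fun t : ℝ => t) :=
      Asymptotics.isLittleO_norm_left.2 hq
    have T1 : (fun t : ℝ => p t (q t)) =o[nhds 0] (fun t => t^k' * t) := by
      refine Asymptotics.IsBigO.trans_isLittleO ?_ (hpn.mul hqn)
      refine Asymptotics.isBigO_of_le _ (fun t => ?_)
      calc ‖p t (q t)‖ ≤ ‖p t‖ * ‖q t‖ := (p t).le_opNorm (q t)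
      _ ≤ ‖‖p t‖ * ‖q t‖‖ := le_abs_self _
    have T2 : (fun t : ℝ => p t (t • A x)) =o[nhds 0] (fun t => t^k' * t) := by
      refine Asymptotics.IsBigO.trans_isLittleO ?_
        (hpn.mul_isBigO (Asymptotics.isBigO_refl (fun t : ℝ => t) _))
      refine Asymptotics.IsBigO.of_bound (‖A x‖) (Filter.Eventually.of_forall fun t => ?_)
      calc ‖p t (t • A x)‖ ≤ ‖p t‖ * ‖t • A x‖ := (p t).le_opNorm _
      _ = ‖A x‖ * ‖‖p t‖ * t‖ := by
          rw [norm_smul, Real.norm_eq_abs (‖p t‖ * t), abs_mul,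
            abs_of_nonneg (norm_nonneg (p t)), Real.norm_eq_abs t]
          ring
    have T3 : (fun t : ℝ => (t^k' / (k'.factorial:ℝ)) * (c (q t)))
        =o[nhds 0] (fun t => t^k' * t) := by
      refine Asymptotics.IsBigO.trans_isLittleO ?_
        ((Asymptotics.isBigO_refl (fun t : ℝ => t^k') _).mul_isLittleO hqn)
      refine Asymptotics.IsBigO.of_bound (‖c‖ / (k'.factorial:ℝ)) (Filter.Eventually.of_forall fun t => ?_)
      have h1 : ‖c (q t)‖ ≤ ‖c‖ * ‖q t‖ := c.le_opNorm _
      have h2 : ‖(t^k' / (k'.factorial:ℝ)) * (c (q t))‖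
          = |t^k'| / (k'.factorial:ℝ) * ‖c (q t)‖ := by
        rw [Real.norm_eq_abs, abs_mul, abs_div, Real.norm_eq_abs]
        rw [abs_of_nonneg (by positivity : (0:ℝ) ≤ (k'.factorial:ℝ))]
      have h3 : ‖(fun t : ℝ => t^k' * ‖q t‖) t‖ = |t^k'| * ‖q t‖ := by
        rw [Real.norm_eq_abs, abs_mul, abs_of_nonneg (norm_nonneg _)]
      rw [h2, h3]
      have hfac : (0:ℝ) < (k'.factorial:ℝ) := by positivity
      rw [div_mul_eq_mul_div, div_mul_eq_mul_div, div_le_div_iff_of_pos_right hfac]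
      calc |t^k'| * ‖c (q t)‖ ≤ |t^k'| * (‖c‖ * ‖q t‖) :=
            mul_le_mul_of_nonneg_left h1 (abs_nonneg _)
      _ = ‖c‖ * (|t^k'| * ‖q t‖) := by ring
    have hsum := (T1.add T2).add T3
    have hid : (fun t : ℝ => (Wf ∘ L) t (X (t • x))
        - ((p t (q t) + p t (t • A x)) + (t^k' / (k'.factorial:ℝ)) * c (q t)))
        = fun t : ℝ => (t^k' * t) * (a / (k'.factorial:ℝ)) := by
      funext t
      have hu_t : (Wf ∘ L) t = p t + (t^k' / (k'.factorial:ℝ)) • c := by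
        rw [hpdef]; simp
      have hX_t : X (t • x) = q t + t • (A x) := by
        rw [hqdef]; simp
      rw [hu_t, hX_t]
      simp only [ContinuousLinearMap.add_apply, ContinuousLinearMap.smul_apply,
        map_add, map_smul, smul_eq_mul, hadef]
      ring
    have hfin : (fun t : ℝ => (t^k' * t) * (a / (k'.factorial:ℝ)))
        =o[nhds 0] (fun t => t^k' * t) := by
      rw [← hid]
      exact (hzero.trans_isLittleO (Asymptotics.isLittleO_zero _ _)).sub hsum
    have hpow : (fun t : ℝ => t^k' * t) = fun t : ℝ => t^(k'+1) := by
      funext t; rw [pow_succ]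
    have hpow2 : (fun t : ℝ => (t^k' * t) * (a / (k'.factorial:ℝ)))
        = fun t : ℝ => t^(k'+1) * (a / (k'.factorial:ℝ)) := by
      funext t; rw [pow_succ]
    rw [hpow, hpow2] at hfin
    have ha0 : a / (k'.factorial:ℝ) = 0 := const_eq_zero_of_isLittleO hfin
    have : a = 0 := by
      field_simp at ha0
      simpa using ha0
    exact this
  -- convert to last slot of the k-th derivative of F
  have hsnoc : (Fin.snoc (fun _ : Fin k' => x) (A x) : Fin (k'+1) → (Fin m → ℝ))
      = fun l => if l.val = k' then A x else x := by
    funext l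
    refine Fin.lastCases ?_ (fun i => ?_) l
    · simp
    · simp only [Fin.snoc_castSucc, Fin.coe_castSucc]
      rw [if_neg (by omega)]
  have hMlast : iteratedFDeriv ℝ (k'+1) F 0
      (fun l : Fin (k'+1) => if l.val = k' then A x else x) = 0 := by
    rw [← hsnoc, iteratedFDeriv_succ_apply_right]
    simp only [Fin.init_snoc, Fin.snoc_last]
    exact hkey
  -- move to slot 0, then to every slot
  have hM0 : iterDD (k'+1) (fun l : Fin (k'+1) => if l.val = 0 then A x else x) F 0 = 0 := by
    rw [← iterDD_if_eq_zero hUopen k' (k'+1) F hF x (A x) (by omega) hU0]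
    rw [← iterDD_eq_iteratedFDeriv hUopen (k'+1) F hF _ hU0]
    exact hMlast
  have hMall : ∀ i : Fin (k'+1),
      iteratedFDeriv ℝ (k'+1) F 0 (Function.update (fun _ => x) i (A x)) = 0 := by
    intro i
    have hupd : Function.update (fun _ : Fin (k'+1) => x) i (A x)
        = fun l => if l.val = i.val then A x else x := by
      funext l
      rw [Function.update_apply]
      by_cases h : l = i
      · rw [if_pos h, if_pos (by rw [h])]
      · rw [if_neg h, if_neg (fun hv => h (Fin.ext hv))]
    rw [hupd, iterDD_eq_iteratedFDeriv hUopen (k'+1) F hF _ hU0,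
      iterDD_if_eq_zero hUopen i.val (k'+1) F hF x (A x) i.isLt hU0]
    exact hM0
  -- compute the derivative of G
  set M := iteratedFDeriv ℝ (k'+1) F 0 with hMdef
  have hGfun : G = fun y => (((k'+1).factorial : ℝ))⁻¹ • M (fun _ => y) := funext hG
  set Δ : (Fin m → ℝ) →L[ℝ] (Fin (k'+1) → Fin m → ℝ) :=
    ContinuousLinearMap.pi (fun _ => ContinuousLinearMap.id ℝ _) with hΔdef
  have hMd : HasFDerivAt (fun y => M (fun _ => y))
      ((M.linearDeriv (fun _ => x)).comp Δ) x := by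
    have h1 := (M.hasFDerivAt (x := fun _ => x)).comp x Δ.hasFDerivAt
    exact h1
  have hGd : HasFDerivAt G
      ((((k'+1).factorial : ℝ))⁻¹ • ((M.linearDeriv (fun _ => x)).comp Δ)) x := by
    rw [hGfun]
    exact hMd.const_smul (((k'+1).factorial : ℝ))⁻¹
  rw [hGd.fderiv]
  rw [ContinuousLinearMap.smul_apply, ContinuousLinearMap.comp_apply]
  have hΔA : Δ (A x) = fun _ : Fin (k'+1) => A x := rfl
  rw [hΔA, ContinuousMultilinearMap.linearDeriv_apply]
  rw [Finset.sum_eq_zero (fun i _ => hMall i)]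
  simp
end

section
/- Let Y act on ℂ[x_1, x_2, x_3, x_4] by Y(P) = x_1 ∂P/∂x_1 + x_2 ∂P/∂x_2 − x_3 ∂P/∂x_3 − x_4 ∂P/∂x_4. Then the ℂ-subalgebra {P ∈ ℂ[x_1, x_2, x_3, x_4] : Y(P) = 0} of polynomial first integrals of Y equals the ℂ-subalgebra generated by the four polynomials x_1 x_3, x_1 x_4, x_2 x_3, x_2 x_4. -/
open MvPolynomial

noncomputable section

/-- The linear operator `P ↦ x₀∂₀P + x₁∂₁P − x₂∂₂P − x₃∂₃P`. -/
private def L : MvPolynomial (Fin 4) ℂ →ₗ[ℂ] MvPolynomial (Fin 4) ℂ :=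
  ((LinearMap.mulLeft ℂ (X 0 : MvPolynomial (Fin 4) ℂ)).comp (pderiv (R := ℂ) (0 : Fin 4)).toLinearMap)
    + ((LinearMap.mulLeft ℂ (X 1 : MvPolynomial (Fin 4) ℂ)).comp (pderiv (R := ℂ) (1 : Fin 4)).toLinearMap)
    - ((LinearMap.mulLeft ℂ (X 2 : MvPolynomial (Fin 4) ℂ)).comp (pderiv (R := ℂ) (2 : Fin 4)).toLinearMap)
    - ((LinearMap.mulLeft ℂ (X 3 : MvPolynomial (Fin 4) ℂ)).comp (pderiv (R := ℂ) (3 : Fin 4)).toLinearMap)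

private lemma Lop_apply (P : MvPolynomial (Fin 4) ℂ) :
    L P = X 0 * pderiv 0 P + X 1 * pderiv 1 P - X 2 * pderiv 2 P - X 3 * pderiv 3 P := rfl

private lemma X_mul_pderiv_monomial (i : Fin 4) (m : Fin 4 →₀ ℕ) (a : ℂ) :
    X i * pderiv i (monomial m a) = monomial m ((m i : ℂ) * a) := by
  rw [pderiv_monomial, X, monomial_mul, one_mul]
  rcases Nat.eq_zero_or_pos (m i) with h | h
  · simp [h]
  · have hm : Finsupp.single i 1 + (m - Finsupp.single i 1) = m := by
      ext j
      rcases eq_or_ne i j with rfl | hj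
      · simp only [Finsupp.add_apply, Finsupp.tsub_apply, Finsupp.single_eq_same]
        omega
      · simp [Finsupp.single_apply, hj]
    rw [hm, mul_comm a]

private lemma L_monomial (m : Fin 4 →₀ ℕ) (a : ℂ) :
    L (monomial m a) = monomial m (((m 0 : ℂ) + m 1 - m 2 - m 3) * a) := by
  rw [Lop_apply, X_mul_pderiv_monomial, X_mul_pderiv_monomial, X_mul_pderiv_monomial,
    X_mul_pderiv_monomial, ← map_add, ← map_sub, ← map_sub]
  congr 1
  ring

private lemma gens_pow_mem :
    ∀ (n a b c d : ℕ), a + b = n → a + b = c + d →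
      (X 0 : MvPolynomial (Fin 4) ℂ) ^ a * X 1 ^ b * X 2 ^ c * X 3 ^ d ∈
        Algebra.adjoin ℂ ({X 0 * X 2, X 0 * X 3, X 1 * X 2, X 1 * X 3} :
          Set (MvPolynomial (Fin 4) ℂ)) := by
  intro n
  induction n with
  | zero =>
    intro a b c d hn h
    obtain ⟨rfl, rfl, rfl, rfl⟩ : a = 0 ∧ b = 0 ∧ c = 0 ∧ d = 0 := by omega
    simpa using one_mem _
  | succ n ih =>
    intro a b c d hn h
    rcases a with _ | a'
    · -- a = 0, so b = n + 1
      rcases b with _ | b'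
      · omega
      rcases c with _ | c'
      · rcases d with _ | d'
        · omega
        · have he : (X 0 : MvPolynomial (Fin 4) ℂ) ^ 0 * X 1 ^ (b' + 1) * X 2 ^ 0 * X 3 ^ (d' + 1)
              = (X 1 * X 3) * (X 0 ^ 0 * X 1 ^ b' * X 2 ^ 0 * X 3 ^ d') := by ring
          rw [he]
          exact mul_mem (Algebra.subset_adjoin (by simp)) (ih 0 b' 0 d' (by omega) (by omega))
      · have he : (X 0 : MvPolynomial (Fin 4) ℂ) ^ 0 * X 1 ^ (b' + 1) * X 2 ^ (c' + 1) * X 3 ^ d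
            = (X 1 * X 2) * (X 0 ^ 0 * X 1 ^ b' * X 2 ^ c' * X 3 ^ d) := by ring
        rw [he]
        exact mul_mem (Algebra.subset_adjoin (by simp)) (ih 0 b' c' d (by omega) (by omega))
    · rcases c with _ | c'
      · rcases d with _ | d'
        · omega
        · have he : (X 0 : MvPolynomial (Fin 4) ℂ) ^ (a' + 1) * X 1 ^ b * X 2 ^ 0 * X 3 ^ (d' + 1)
              = (X 0 * X 3) * (X 0 ^ a' * X 1 ^ b * X 2 ^ 0 * X 3 ^ d') := by ring
          rw [he]
          exact mul_mem (Algebra.subset_adjoin (by simp)) (ih a' b 0 d' (by omega) (by omega))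
      · have he : (X 0 : MvPolynomial (Fin 4) ℂ) ^ (a' + 1) * X 1 ^ b * X 2 ^ (c' + 1) * X 3 ^ d
            = (X 0 * X 2) * (X 0 ^ a' * X 1 ^ b * X 2 ^ c' * X 3 ^ d) := by ring
        rw [he]
        exact mul_mem (Algebra.subset_adjoin (by simp)) (ih a' b c' d (by omega) (by omega))

private lemma monomial_mem (m : Fin 4 →₀ ℕ) (a : ℂ) (h : m 0 + m 1 = m 2 + m 3) :
    monomial m a ∈ Algebra.adjoin ℂ ({X 0 * X 2, X 0 * X 3, X 1 * X 2, X 1 * X 3} :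
      Set (MvPolynomial (Fin 4) ℂ)) := by
  rw [monomial_eq]
  refine mul_mem ?_ ?_
  · have : (C a : MvPolynomial (Fin 4) ℂ) = algebraMap ℂ _ a := rfl
    rw [this]
    exact Subalgebra.algebraMap_mem _ a
  · rw [Finsupp.prod_fintype _ _ (fun i => pow_zero _), Fin.prod_univ_four]
    exact gens_pow_mem (m 0 + m 1) (m 0) (m 1) (m 2) (m 3) rfl h

end

/-- The algebra of polynomial first integrals of
Y = x₁∂/∂x₁ + x₂∂/∂x₂ − x₃∂/∂x₃ − x₄∂/∂x₄ on ℂ[x₁,x₂,x₃,x₄] is generated by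
x₁x₃, x₁x₄, x₂x₃, x₂x₄. -/
theorem first_integrals_algebra_generated
    (Y : MvPolynomial (Fin 4) ℂ → MvPolynomial (Fin 4) ℂ)
    (hY : ∀ P, Y P = X 0 * pderiv 0 P + X 1 * pderiv 1 P
      - X 2 * pderiv 2 P - X 3 * pderiv 3 P) :
    ∀ P : MvPolynomial (Fin 4) ℂ,
      (Y P = 0 ↔ P ∈ Algebra.adjoin ℂ
        ({X 0 * X 2, X 0 * X 3, X 1 * X 2, X 1 * X 3} :
          Set (MvPolynomial (Fin 4) ℂ))) := by
  have hYL : ∀ P, Y P = L P := fun P => by rw [hY, Lop_apply]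
  intro P
  constructor
  · intro hP
    have hLP : L P = 0 := by rw [← hYL]; exact hP
    -- each monomial in the support has weight zero
    have hw : ∀ m ∈ P.support, m 0 + m 1 = m 2 + m 3 := by
      intro m hm
      have h1 : L P = ∑ m' ∈ P.support,
          monomial m' (((m' 0 : ℂ) + m' 1 - m' 2 - m' 3) * coeff m' P) := by
        conv_lhs => rw [← P.support_sum_monomial_coeff]
        rw [map_sum]
        exact Finset.sum_congr rfl fun m' _ => L_monomial m' (coeff m' P)
      have h2 : coeff m (L P) = ((m 0 : ℂ) + m 1 - m 2 - m 3) * coeff m P := by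
        rw [h1, coeff_sum]
        rw [Finset.sum_eq_single m]
        · rw [coeff_monomial, if_pos rfl]
        · intro m' _ hne
          rw [coeff_monomial, if_neg hne]
        · intro hnot
          exact absurd hm hnot
      rw [hLP, coeff_zero] at h2
      have hc : coeff m P ≠ 0 := mem_support_iff.mp hm
      have : ((m 0 : ℂ) + m 1 - m 2 - m 3) = 0 := by
        rcases mul_eq_zero.mp h2.symm with h | h
        · exact h
        · exact absurd h hc
      have : ((m 0 : ℂ) + m 1) = (m 2 : ℂ) + m 3 := by linear_combination this
      exact_mod_cast this
    exact P.support_sum_monomial_coeff ▸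
      sum_mem fun m hm => monomial_mem m (coeff m P) (hw m hm)
  · intro hP
    rw [hYL]
    -- the kernel of L is a subalgebra
    induction hP using Algebra.adjoin_induction with
    | mem x hx =>
      rcases hx with rfl | rfl | rfl | rfl <;>
        · rw [Lop_apply]
          simp [pderiv_mul]
          ring
    | algebraMap r =>
      have : (algebraMap ℂ (MvPolynomial (Fin 4) ℂ) r) = C r := rfl
      rw [this, Lop_apply]
      simp [pderiv_C]
    | add x y hx hy ihx ihy => rw [map_add, ihx, ihy, add_zero]
    | mul x y hx hy ihx ihy =>
      rw [Lop_apply] at ihx ihy ⊢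
      simp only [pderiv_mul]
      ring_nf
      ring_nf at ihx ihy
      linear_combination x * ihy + y * ihx
end

section
/- Let Y act on ℂ[x_1, x_2, x_3, x_4] by Y(P) = x_1 ∂P/∂x_1 + x_2 ∂P/∂x_2 − x_3 ∂P/∂x_3 − x_4 ∂P/∂x_4, and let R := {P ∈ ℂ[x_1, x_2, x_3, x_4] : Y(P) = 0} be the algebra of polynomial first integrals of Y. Then R is not generated as a ℂ-algebra by any three of its elements: there do not exist P_1, P_2, P_3 ∈ R such that the ℂ-subalgebra generated by {P_1, P_2, P_3} equals R. -/
/-!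
Every monomial of a first integral has as many factors among `x₁, x₂` as among `x₃, x₄`, so
first integrals have no linear terms. Hence the coefficients of the four mixed monomials
`xᵢxⱼ` (`i ∈ {1, 2}`, `j ∈ {3, 4}`) form a linear map `ψ : R → ℂ⁴` that is a derivation at the
origin, `ψ(PQ) = P(0) ψ(Q) + Q(0) ψ(P)`. On an algebra generated by `P₁, P₂, P₃` its image lies
in the span of `ψ(P₁), ψ(P₂), ψ(P₃)`; but the mixed monomials are themselves first integrals and
their images are the standard basis of `ℂ⁴`.
-/

open MvPolynomial

namespace MvPolynomial

variable {R σ : Type*} [CommSemiring R]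

theorem coeff_X_mul_pderiv (i : σ) (m : σ →₀ ℕ) (p : MvPolynomial σ R) :
    coeff m (X i * pderiv i p) = m i * coeff m p := by
  induction p using MvPolynomial.induction_on' with
  | monomial s a =>
    classical
    rw [X_mul_pderiv_monomial, nsmul_eq_mul, ← C_eq_coe_nat, coeff_C_mul, coeff_monomial]
    split_ifs with h <;> simp [h]
  | add p q hp hq => simp only [mul_add, map_add, coeff_add, hp, hq]

theorem coeff_zero_pderiv (i : σ) (p : MvPolynomial σ R) :
    coeff 0 (pderiv i p) = coeff (Finsupp.single i 1) p := by
  simp [coeff_pderiv]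

theorem coeff_single_add_single_eq_coeff_zero_pderiv_pderiv {a b : σ} (hab : a ≠ b)
    (p : MvPolynomial σ R) :
    coeff (Finsupp.single a 1 + Finsupp.single b 1) p = coeff 0 (pderiv a (pderiv b p)) := by
  rw [coeff_zero_pderiv, coeff_pderiv, Finsupp.single_eq_of_ne' hab]
  simp

theorem coeff_single_add_single_mul {a b : σ} (hab : a ≠ b) (p q : MvPolynomial σ R) :
    coeff (Finsupp.single a 1 + Finsupp.single b 1) (p * q) =
      coeff 0 p * coeff (Finsupp.single a 1 + Finsupp.single b 1) q +
      coeff (Finsupp.single a 1) p * coeff (Finsupp.single b 1) q +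
      coeff (Finsupp.single b 1) p * coeff (Finsupp.single a 1) q +
      coeff (Finsupp.single a 1 + Finsupp.single b 1) p * coeff 0 q := by
  have coeff_zero_mul (f g : MvPolynomial σ R) : coeff 0 (f * g) = coeff 0 f * coeff 0 g := by
    simp only [← constantCoeff_eq, map_mul]
  simp only [coeff_single_add_single_eq_coeff_zero_pderiv_pderiv hab, pderiv_mul, map_add,
    coeff_add, coeff_zero_mul, coeff_zero_pderiv]
  ring

end MvPolynomial

theorem Algebra.mem_span_image_of_mem_adjoin {R A M : Type*} [CommSemiring R] [Semiring A]
    [Algebra R A] [AddCommGroup M] [Module R M] (D : A →ₗ[R] M) (ε : A →+* R) {s : Set A}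
    (hD : ∀ x ∈ adjoin R s, ∀ y ∈ adjoin R s, D (x * y) = ε x • D y + ε y • D x)
    {x : A} (hx : x ∈ adjoin R s) : D x ∈ Submodule.span R (D '' s) := by
  have hD_one : D 1 = 0 := by
    have h := hD 1 (one_mem _) 1 (one_mem _)
    rw [mul_one, ε.map_one, one_smul, left_eq_add] at h
    exact h
  induction hx using Algebra.adjoin_induction with
  | mem x hx => exact Submodule.subset_span (Set.mem_image_of_mem D hx)
  | algebraMap r => simp [Algebra.algebraMap_eq_smul_one, hD_one]
  | add x y _ _ hx hy => simpa only [map_add] using add_mem hx hy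
  | mul x y hx' hy' hx hy =>
    rw [hD x hx' y hy']
    exact add_mem (Submodule.smul_mem _ _ hy) (Submodule.smul_mem _ _ hx)

/-- `Y = x₁∂₁ + x₂∂₂ - x₃∂₃ - x₄∂₄`, with the variables indexed from `0`. -/
noncomputable def saddleField (P : MvPolynomial (Fin 4) ℂ) : MvPolynomial (Fin 4) ℂ :=
  X 0 * pderiv 0 P + X 1 * pderiv 1 P - X 2 * pderiv 2 P - X 3 * pderiv 3 P

theorem coeff_saddleField (m : Fin 4 →₀ ℕ) (P : MvPolynomial (Fin 4) ℂ) :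
    coeff m (saddleField P) = ((m 0 + m 1 : ℂ) - m 2 - m 3) * coeff m P := by
  simp only [saddleField, coeff_sub, coeff_add, coeff_X_mul_pderiv]
  ring

theorem saddleField_eq_zero_iff {P : MvPolynomial (Fin 4) ℂ} :
    saddleField P = 0 ↔ ∀ m : Fin 4 →₀ ℕ, ((m 0 + m 1 : ℂ) - m 2 - m 3) * coeff m P = 0 := by
  simp only [MvPolynomial.ext_iff, coeff_saddleField, coeff_zero]

theorem coeff_single_eq_zero_of_saddleField_eq_zero {P : MvPolynomial (Fin 4) ℂ}
    (hP : saddleField P = 0) (i : Fin 4) : coeff (Finsupp.single i 1) P = 0 := by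
  have h := saddleField_eq_zero_iff.1 hP (Finsupp.single i 1)
  fin_cases i <;> simpa using h

/-- The exponent of `X k.1 * X (k.2 + 2)`. -/
noncomputable def mixedExponent (k : Fin 2 × Fin 2) : Fin 4 →₀ ℕ :=
  Finsupp.single (Fin.castAdd 2 k.1) 1 + Finsupp.single (Fin.natAdd 2 k.2) 1

theorem mixedExponent_injective : Function.Injective mixedExponent := by
  rintro ⟨i, j⟩ ⟨i', j'⟩ h
  have hi := DFunLike.congr_fun h (Fin.castAdd 2 i)
  have hj := DFunLike.congr_fun h (Fin.natAdd 2 j)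
  simp only [mixedExponent, Finsupp.add_apply, Finsupp.single_apply, Fin.ext_iff, Fin.val_castAdd,
    Fin.val_natAdd] at hi hj
  rw [Prod.mk.injEq, Fin.ext_iff, Fin.ext_iff]
  have := i.isLt
  split_ifs at hi hj <;> omega

theorem saddleField_monomial_mixedExponent (k : Fin 2 × Fin 2) (c : ℂ) :
    saddleField (monomial (mixedExponent k) c) = 0 := by
  classical
  refine saddleField_eq_zero_iff.2 fun m => ?_
  rw [coeff_monomial]
  split_ifs with h
  · subst h
    obtain ⟨i, j⟩ := k
    fin_cases i <;> fin_cases j <;> simp [mixedExponent]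
  · rw [mul_zero]

noncomputable def mixedCoeffs : MvPolynomial (Fin 4) ℂ →ₗ[ℂ] (Fin 2 × Fin 2 → ℂ) :=
  LinearMap.pi fun k => lcoeff ℂ (mixedExponent k)

theorem mixedCoeffs_monomial (k : Fin 2 × Fin 2) :
    mixedCoeffs (monomial (mixedExponent k) 1) = Pi.single k 1 := by
  classical
  ext k'
  simp [mixedCoeffs, coeff_monomial, Pi.single_apply, mixedExponent_injective.eq_iff, eq_comm]

theorem mixedCoeffs_mul {P Q : MvPolynomial (Fin 4) ℂ} (hP : saddleField P = 0)
    (hQ : saddleField Q = 0) :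
    mixedCoeffs (P * Q) = constantCoeff P • mixedCoeffs Q + constantCoeff Q • mixedCoeffs P := by
  ext k
  have hne : Fin.castAdd 2 k.1 ≠ Fin.natAdd 2 k.2 := by
    rw [Ne, Fin.ext_iff, Fin.val_castAdd, Fin.val_natAdd]
    omega
  simp only [mixedCoeffs, mixedExponent, LinearMap.pi_apply, lcoeff_apply, Pi.add_apply,
    Pi.smul_apply, smul_eq_mul, constantCoeff_eq, coeff_single_add_single_mul hne,
    coeff_single_eq_zero_of_saddleField_eq_zero hP, coeff_single_eq_zero_of_saddleField_eq_zero hQ]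
  ring

/-- The algebra R of polynomial first integrals of
Y = x₁∂/∂x₁ + x₂∂/∂x₂ − x₃∂/∂x₃ − x₄∂/∂x₄ on ℂ[x₁,x₂,x₃,x₄] cannot be generated,
as a ℂ-algebra, by three of its elements. -/
theorem first_integrals_not_three_generated
    (Y : MvPolynomial (Fin 4) ℂ → MvPolynomial (Fin 4) ℂ)
    (hY : ∀ P, Y P = X 0 * pderiv 0 P + X 1 * pderiv 1 P
      - X 2 * pderiv 2 P - X 3 * pderiv 3 P) :
    ¬ ∃ P₁ P₂ P₃ : MvPolynomial (Fin 4) ℂ,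
        Y P₁ = 0 ∧ Y P₂ = 0 ∧ Y P₃ = 0 ∧
        ∀ P : MvPolynomial (Fin 4) ℂ,
          (P ∈ Algebra.adjoin ℂ ({P₁, P₂, P₃} : Set (MvPolynomial (Fin 4) ℂ)) ↔
            Y P = 0) := by
  obtain rfl : Y = saddleField := funext hY
  rintro ⟨P₁, P₂, P₃, -, -, -, hgen⟩
  set s : Finset (MvPolynomial (Fin 4) ℂ) := {P₁, P₂, P₃}
  have hspan : Submodule.span ℂ (mixedCoeffs '' s) = ⊤ := by
    rw [eq_top_iff, ← (Pi.basisFun ℂ _).span_eq, Submodule.span_le]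
    rintro _ ⟨k, rfl⟩
    rw [Pi.basisFun_apply, ← mixedCoeffs_monomial]
    refine Algebra.mem_span_image_of_mem_adjoin mixedCoeffs constantCoeff ?_ ?_
    · intro x hx y hy
      exact mixedCoeffs_mul ((hgen x).1 (by simpa [s] using hx)) ((hgen y).1 (by simpa [s] using hy))
    · simpa [s] using (hgen _).2 (saddleField_monomial_mixedExponent k 1)
  have hcard := finrank_span_finset_le_card (R := ℂ) (s.image mixedCoeffs)
  rw [Finset.coe_image, Set.finrank, hspan, finrank_top, Module.finrank_fintype_fun_eq_card] at hcard
  have := (hcard.trans Finset.card_image_le).trans Finset.card_le_three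
  simp at this
end

section
/- Let C be a p×m complex matrix of rank p (with p < m, q := m − p) such that the set {α ∈ ℤ_{≥0}^m : Cα = 0} of nonnegative integer solutions of the resonance equations contains q linearly independent elements. Then there exists an invertible matrix A ∈ GL(p, ℂ) such that all entries of AC are integers. (A nondegenerate linear integrable system can always be brought, by an invertible linear change of its generating vector fields, to one whose diagonal coefficients are integers.) -/
/-!
The resonance equations say that every row of `C` lies in the kernel of the `q × m` integer
matrix `D` whose rows are the resonances `α_j`. Since these rows are independent, that kernel
has dimension `m - q = p`. Because `D` is rational, its kernel has a rational basis, which after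
clearing denominators is integral, and which stays independent over `ℂ`. The `p` independent
rows of `C` span the same `p`-dimensional space, so an invertible `A` carries them to that
integral basis.
-/

open Matrix Module Submodule Fintype

namespace Matrix

variable {K : Type*} [Field K] {ι κ n : Type*}

theorem mulVec_row_eq_zero_of_mulVec_row_eq_zero {R : Type*} [CommSemiring R] [Fintype n]
    {C : Matrix ι n R} {E : Matrix κ n R} (h : ∀ j, C *ᵥ E j = 0) (i : ι) : E *ᵥ C i = 0 := by
  funext j
  rw [Pi.zero_apply, mulVec, dotProduct_comm]
  exact congrFun (h j) i

theorem exists_mul_eq_of_row_mem_span {R : Type*} [CommSemiring R] [Fintype ι]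
    {C : Matrix ι n R} {U : Matrix κ n R} (h : ∀ i, U i ∈ span R (Set.range C.row)) :
    ∃ A : Matrix κ ι R, A * C = U := by
  simp_rw [← range_vecMulLinear, LinearMap.mem_range, vecMulLinear_apply] at h
  choose A hA using h
  exact ⟨of A, by ext i l; rw [← hA i]; rfl⟩

theorem isUnit_of_linearIndependent_mul [Fintype ι] [DecidableEq ι] {A : Matrix ι ι K}
    {C : Matrix ι n K} (h : LinearIndependent K (A * C).row) : IsUnit A := by
  rw [← vecMul_injective_iff_isUnit]
  rw [← vecMul_injective_iff] at h
  refine Function.Injective.of_comp (f := C.vecMul) ?_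
  simpa only [Function.comp_def, vecMul_vecMul] using h

theorem linearIndependent_row_of_rank_eq [Fintype ι] [Fintype n] {A : Matrix ι n K}
    (h : A.rank = card ι) : LinearIndependent K A.row := by
  rw [linearIndependent_iff_card_eq_finrank_span, ← h, rank_eq_finrank_span_row]
  rfl

theorem exists_isUnit_mul_eq_of_row_mem [Fintype ι] [DecidableEq ι] [Fintype n]
    {S : Submodule K (n → K)} (hS : finrank K S = card ι) {C U : Matrix ι n K}
    (hC : LinearIndependent K C.row) (hU : LinearIndependent K U.row) (hCS : ∀ i, C i ∈ S)
    (hUS : ∀ i, U i ∈ S) : ∃ A : Matrix ι ι K, IsUnit A ∧ A * C = U := by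
  have hspan : span K (Set.range C.row) = S :=
    eq_of_le_of_finrank_eq (span_le.mpr (Set.range_subset_iff.mpr hCS))
      (by rw [finrank_span_eq_card hC, hS])
  obtain ⟨A, rfl⟩ := exists_mul_eq_of_row_mem_span fun i => hspan ▸ hUS i
  exact ⟨A, isUnit_of_linearIndependent_mul hU, rfl⟩

theorem finrank_ker_mulVecLin [Fintype κ] [Fintype n] {D : Matrix κ n K}
    (hD : LinearIndependent K D.row) :
    finrank K (LinearMap.ker D.mulVecLin) = card n - card κ := by
  have := LinearMap.finrank_range_add_finrank_ker D.mulVecLin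
  rw [← Matrix.rank, hD.rank_matrix, finrank_fintype_fun_eq_card] at this
  omega

theorem exists_linearIndependent_row_mulVec_eq_zero [Fintype ι] [Fintype κ] [Fintype n]
    {D : Matrix κ n K} (hD : LinearIndependent K D.row) (hcard : card κ + card ι = card n) :
    ∃ V : Matrix ι n K, LinearIndependent K V.row ∧ ∀ i, D *ᵥ V i = 0 := by
  have hker : finrank K (LinearMap.ker D.mulVecLin) = card ι := by
    rw [finrank_ker_mulVecLin hD]
    omega
  let b := (finBasisOfFinrankEq K _ hker).reindex (equivFin ι).symm
  refine ⟨of fun i => b i, ?_, fun i => (b i).2⟩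
  exact b.linearIndependent.map' (LinearMap.ker D.mulVecLin).subtype (ker_subtype _)

/-- A subspace of `L^n` cut out by independent equations over `K` has a basis defined over `K`. -/
theorem exists_isUnit_mul_eq_map {L : Type*} [Field L] [Algebra K L] [Fintype ι] [DecidableEq ι]
    [Fintype κ] [Fintype n] {D : Matrix κ n K} (hD : LinearIndependent K D.row)
    (hcard : card κ + card ι = card n) {C : Matrix ι n L} (hC : LinearIndependent L C.row)
    (hCD : ∀ i, D.map (algebraMap K L) *ᵥ C i = 0) {V : Matrix ι n K}
    (hV : LinearIndependent K V.row) (hVD : ∀ i, D *ᵥ V i = 0) :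
    ∃ A : Matrix ι ι L, IsUnit A ∧ A * C = V.map (algebraMap K L) := by
  have hDL : LinearIndependent L (D.map (algebraMap K L)).row :=
    linearIndependent_algebraMap_comp_iff.mpr hD
  refine exists_isUnit_mul_eq_of_row_mem (S := LinearMap.ker (D.map (algebraMap K L)).mulVecLin)
    ?_ hC (linearIndependent_algebraMap_comp_iff.mpr hV) hCD fun i => ?_
  · rw [finrank_ker_mulVecLin hDL]
    omega
  · rw [LinearMap.mem_ker, mulVecLin_apply]
    ext j
    rw [show V.map (algebraMap K L) i = algebraMap K L ∘ V i from rfl, ← RingHom.map_mulVec, hVD]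
    simp

theorem exists_smul_eq_map_intCast [Finite ι] [Finite n] (V : Matrix ι n ℚ) :
    ∃ c : ℚ, c ≠ 0 ∧ ∃ W : Matrix ι n ℤ, c • V = W.map (↑) := by
  obtain ⟨c, hc⟩ :=
    IsLocalization.exist_integer_multiples_of_finite (nonZeroDivisors ℤ) fun p : ι × n => V p.1 p.2
  choose W hW using hc
  refine ⟨c, by simp, of fun i j => W (i, j), ?_⟩
  ext i j
  simpa using (hW (i, j)).symm

theorem exists_int_linearIndependent_row_mulVec_eq_zero [Fintype ι] [Fintype κ] [Fintype n]
    {D : Matrix κ n ℚ} (hD : LinearIndependent ℚ D.row) (hcard : card κ + card ι = card n) :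
    ∃ W : Matrix ι n ℤ, LinearIndependent ℚ (W.map (Int.cast : ℤ → ℚ)).row ∧
      ∀ i, D *ᵥ W.map Int.cast i = 0 := by
  obtain ⟨V, hV, hVD⟩ := exists_linearIndependent_row_mulVec_eq_zero hD hcard
  obtain ⟨c, hc, W, hW⟩ := V.exists_smul_eq_map_intCast
  refine ⟨W, ?_, fun i => ?_⟩
  · rw [← hW]
    exact hV.units_smul fun _ => Units.mk0 c hc
  · rw [← hW, show (c • V) i = c • V i from rfl, mulVec_smul, hVD, smul_zero]

end Matrix

/-- If the p×m matrix C of coefficients of a nondegenerate linear integrable system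
has rank p and the nonnegative integer solutions of the resonance equations Cα = 0
contain q = m − p linearly independent elements, then some invertible linear change
A ∈ GL(p,ℂ) makes all the coefficients integers: all entries of AC are integers. -/
theorem resonance_implies_integer_coefficients
    (p m q : ℕ) (hpm : p < m) (hq : q = m - p)
    (C : Matrix (Fin p) (Fin m) ℂ) (hrank : C.rank = p)
    (hsol : ∃ α : Fin q → (Fin m → ℕ),
      (∀ j, C.mulVec (fun l => ((α j l : ℕ) : ℂ)) = 0) ∧
      LinearIndependent ℂ (fun j => (fun l => ((α j l : ℕ) : ℂ)) : Fin q → Fin m → ℂ)) :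
    ∃ A : Matrix (Fin p) (Fin p) ℂ, IsUnit A ∧
      ∀ i j, ∃ z : ℤ, (A * C) i j = (z : ℂ) := by
  obtain ⟨α, hαC, hα⟩ := hsol
  let D : Matrix (Fin q) (Fin m) ℚ := of fun j l => (α j l : ℚ)
  have hDℂ : D.map (algebraMap ℚ ℂ) = of fun j l => (α j l : ℂ) := by
    ext
    simp [D]
  have hD : LinearIndependent ℚ D.row := by
    rw [← linearIndependent_algebraMap_comp_iff (S := ℂ)]
    change LinearIndependent ℂ (D.map (algebraMap ℚ ℂ)).row
    rwa [hDℂ]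
  have hcard : card (Fin q) + card (Fin p) = card (Fin m) := by
    simp only [card_fin]
    omega
  have hC : LinearIndependent ℂ C.row := linearIndependent_row_of_rank_eq (by rw [hrank, card_fin])
  obtain ⟨W, hW, hWD⟩ := exists_int_linearIndependent_row_mulVec_eq_zero hD hcard
  obtain ⟨A, hA, hAC⟩ := exists_isUnit_mul_eq_map hD hcard hC
    (by rw [hDℂ]; exact mulVec_row_eq_zero_of_mulVec_row_eq_zero hαC) hW hWD
  exact ⟨A, hA, fun i j => ⟨W i j, by simp [hAC]⟩⟩
end
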